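/- arXiv:2408.04888 — 2 statements merged into one kernel-verified Lean document; each statement's English description precedes it below -/
import Mathlib

section
/- (Kearns–Saul inequality) For every $p \in (0,1)$ with $p \ne 1/2$ and every $\lambda \in \mathbb{R}$, $\log\left(p e^{(1-p)\lambda} + (1-p)e^{-p\lambda}\right) \le \frac{2p-1}{4\log\frac{p}{1-p}}\,\lambda^2$. In other words, a centered Bernoulli($p$) random variable is sub-Gaussian with parameter $\sigma^2(p) = \frac{2p-1}{2\log\frac{p}{1-p}}$. -/
/-!
Write `2p - 1 = tanh a`, i.e. `a = artanh (2p - 1) = log (p / (1 - p)) / 2`. Then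
`p e^{(1-p)λ} + (1-p) e^{-pλ} = e^{-tanh a · s} cosh (a + s) / cosh a` with `s = λ / 2`, so the claim
says that `x ↦ log (cosh x) - tanh a / (2a) · x²` is maximal at `x = a`. Its derivative is
`x (tanh x / x - tanh a / a)`, and `tanh x / x` is decreasing on `(0, ∞)`.
-/

open Set

namespace Real

theorem hasDerivAt_tanh (x : ℝ) : HasDerivAt tanh (1 / cosh x ^ 2) x := by
  have h := (hasDerivAt_sinh x).div (hasDerivAt_cosh x) (cosh_pos x).ne'
  rw [show tanh = sinh / cosh from funext tanh_eq_sinh_div_cosh]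
  refine h.congr_deriv ?_
  rw [← cosh_sq_sub_sinh_sq x]
  ring

theorem antitoneOn_tanh_div_self : AntitoneOn (fun x => tanh x / x) (Ioi 0) := by
  have hderiv : ∀ x ∈ Ioi (0 : ℝ),
      HasDerivAt (fun x => tanh x / x) ((1 / cosh x ^ 2 * x - tanh x * 1) / x ^ 2) x :=
    fun x hx => (hasDerivAt_tanh x).div (hasDerivAt_id x) (ne_of_gt hx)
  refine antitoneOn_of_deriv_nonpos (convex_Ioi 0)
    (fun x hx => (hderiv x hx).continuousAt.continuousWithinAt)
    (fun x hx => (hderiv x (interior_subset hx)).differentiableAt.differentiableWithinAt)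
    fun x hx => ?_
  rw [interior_Ioi, mem_Ioi] at hx
  rw [(hderiv x hx).deriv]
  have hsinh : x ≤ sinh x := self_le_sinh_iff.2 hx.le
  have hcosh : 1 ≤ cosh x := one_le_cosh x
  have hsinh_le : x ≤ sinh x * cosh x := by nlinarith
  have hnum : x / cosh x ^ 2 ≤ tanh x := by
    rw [tanh_eq_sinh_div_cosh, div_le_div_iff₀ (by positivity) (cosh_pos x)]
    nlinarith
  apply div_nonpos_of_nonpos_of_nonneg _ (sq_nonneg x)
  rw [one_div_mul_eq_div, mul_one]
  linarith

theorem isMaxOn_log_cosh_sub_mul_sq {a : ℝ} (ha : 0 < a) :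
    IsMaxOn (fun x => log (cosh x) - tanh a / (2 * a) * x ^ 2) univ a := by
  set K := fun x => log (cosh x) - tanh a / (2 * a) * x ^ 2
  have hderiv : ∀ x, HasDerivAt K (tanh x - tanh a / (2 * a) * (2 * x)) x := by
    intro x
    refine (((hasDerivAt_cosh x).log (cosh_pos x).ne').sub
      ((hasDerivAt_pow 2 x).const_mul (tanh a / (2 * a)))).congr_deriv ?_
    rw [← tanh_eq_sinh_div_cosh]
    norm_num
  have hcont : Continuous K := continuous_iff_continuousAt.2 fun x => (hderiv x).continuousAt
  have hdiff {s : Set ℝ} : DifferentiableOn ℝ K s :=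
    fun x _ => (hderiv x).differentiableAt.differentiableWithinAt
  have hslope {x : ℝ} (hx : 0 < x) :
      deriv K x = x * (tanh x / x - tanh a / a) := by
    rw [(hderiv x).deriv]
    field_simp
  have hmono : MonotoneOn K (Icc 0 a) := by
    refine monotoneOn_of_deriv_nonneg (convex_Icc 0 a) hcont.continuousOn hdiff fun x hx => ?_
    rw [interior_Icc] at hx
    rw [hslope hx.1]
    exact mul_nonneg hx.1.le (sub_nonneg.2 (antitoneOn_tanh_div_self hx.1 ha hx.2.le))
  have hanti : AntitoneOn K (Ici a) := by
    refine antitoneOn_of_deriv_nonpos (convex_Ici a) hcont.continuousOn hdiff fun x hx => ?_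
    rw [interior_Ici] at hx
    have hx0 : 0 < x := ha.trans hx
    rw [hslope hx0]
    exact mul_nonpos_of_nonneg_of_nonpos hx0.le
      (sub_nonpos.2 (antitoneOn_tanh_div_self ha hx0 hx.le))
  refine isMaxOn_univ_iff.2 fun x => ?_
  have heven : K x = K |x| := by simp only [K, cosh_abs, sq_abs]
  rw [heven]
  rcases le_or_gt |x| a with hxa | hax
  · exact hmono ⟨abs_nonneg x, hxa⟩ ⟨ha.le, le_rfl⟩ hxa
  · exact hanti (mem_Ici.2 le_rfl) hax.le hax.le

theorem log_cosh_add_sub_log_cosh_le {a : ℝ} (ha : a ≠ 0) (s : ℝ) :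
    log (cosh (a + s)) - log (cosh a) ≤ tanh a * s + tanh a / (2 * a) * s ^ 2 := by
  wlog ha_pos : 0 < a generalizing a s
  · have h := this (neg_ne_zero.2 ha) (-s) (neg_pos.2 (lt_of_le_of_ne (not_lt.1 ha_pos) ha))
    rwa [← neg_add, cosh_neg, cosh_neg, tanh_neg, neg_mul_neg, mul_neg, neg_div_neg_eq,
      neg_sq] at h
  have hmax := isMaxOn_univ_iff.1 (isMaxOn_log_cosh_sub_mul_sq ha_pos) (a + s)
  have hsq :
      tanh a / (2 * a) * ((a + s) ^ 2 - a ^ 2) = tanh a * s + tanh a / (2 * a) * s ^ 2 := by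
    field_simp
    ring
  linarith

theorem cosh_add_div_cosh (a s : ℝ) :
    cosh (a + s) / cosh a = (1 + tanh a) / 2 * exp s + (1 - tanh a) / 2 * exp (-s) := by
  rw [cosh_add, tanh_eq_sinh_div_cosh, cosh_eq s, sinh_eq s]
  field_simp
  ring

theorem two_mul_artanh_two_mul_sub_one {p : ℝ} (hp : p ∈ Ioo 0 1) :
    2 * artanh (2 * p - 1) = log (p / (1 - p)) := by
  obtain ⟨hp0, hp1⟩ := hp
  have hodds : (1 + (2 * p - 1)) / (1 - (2 * p - 1)) = p / (1 - p) := by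
    rw [div_eq_div_iff (by linarith) (by linarith)]
    ring
  rw [artanh_eq_half_log ⟨by linarith, by linarith⟩, hodds]
  ring

end Real

open Real

/-- Kearns–Saul inequality: a centered Bernoulli(`p`) random variable is sub-Gaussian with
parameter `(2p-1)/(2 log(p/(1-p)))`. -/
theorem kearnsSaul (p : ℝ) (hp : p ∈ Set.Ioo (0 : ℝ) 1) (hp2 : p ≠ 1 / 2) (lam : ℝ) :
    Real.log (p * Real.exp ((1 - p) * lam) + (1 - p) * Real.exp (-p * lam))
      ≤ (2 * p - 1) / (4 * Real.log (p / (1 - p))) * lam ^ 2 := by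
  have hq : 2 * p - 1 ∈ Ioo (-1 : ℝ) 1 := ⟨by linarith [hp.1], by linarith [hp.2]⟩
  set a := artanh (2 * p - 1)
  have htanh : tanh a = 2 * p - 1 := tanh_artanh hq
  have ha : a ≠ 0 := fun h => hp2 (by rw [h, tanh_zero] at htanh; linarith)
  have hlog : log (p / (1 - p)) = 2 * a := (two_mul_artanh_two_mul_sub_one hp).symm
  set s := lam / 2
  have hmgf : p * exp ((1 - p) * lam) + (1 - p) * exp (-p * lam)
      = exp (-tanh a * s) * (cosh (a + s) / cosh a) := by
    rw [cosh_add_div_cosh, htanh, show (1 - p) * lam = -(2 * p - 1) * s + s by ring,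
      show -p * lam = -(2 * p - 1) * s + -s by ring, exp_add, exp_add]
    ring
  have hcosh := log_cosh_add_sub_log_cosh_le ha s
  rw [hmgf, log_mul (exp_pos _).ne' (div_pos (cosh_pos _) (cosh_pos _)).ne', log_exp,
    log_div (cosh_pos _).ne' (cosh_pos _).ne', hlog, show lam ^ 2 = 4 * s ^ 2 by ring, ← htanh]
  have hcoef : tanh a / (4 * (2 * a)) * (4 * s ^ 2) = tanh a / (2 * a) * s ^ 2 := by
    field_simp
  linarith
end

section
/- (Composition of two LDP randomisers, numeric part) For all reals $\varepsilon_1, \varepsilon_2 > 0$, $\log\left(\frac{e^{\varepsilon_1+\varepsilon_2}+1}{e^{\varepsilon_1}+e^{\varepsilon_2}}\right) \le \frac{1}{2}\varepsilon_1\varepsilon_2$. -/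
/-!
Writing `exp a + exp b = 2 exp ((a + b) / 2) cosh ((a - b) / 2)` for both the numerator
(with `b = 0`) and the denominator, the quotient becomes `cosh x / cosh y` with
`x = (ε₁ + ε₂) / 2`, `y = (ε₁ - ε₂) / 2`, and `x ^ 2 - y ^ 2 = ε₁ ε₂`. So it suffices that
`u ↦ u ^ 2 / 2 - log (cosh u)` increases with `|u|`; its derivative `u - tanh u` is
nonnegative for `u ≥ 0` because `sinh u ≤ u cosh u`.
-/

open Real Set

namespace Real

theorem exp_add_exp_eq_two_mul_exp_mul_cosh (a b : ℝ) :
    exp a + exp b = 2 * exp ((a + b) / 2) * cosh ((a - b) / 2) := by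
  rw [cosh_eq, mul_div_assoc', mul_assoc 2, mul_div_cancel_left₀ _ two_ne_zero, mul_add,
    ← exp_add, ← exp_add]
  ring_nf

theorem exp_add_add_one_div_exp_add_exp (a b : ℝ) :
    (exp (a + b) + 1) / (exp a + exp b) = cosh ((a + b) / 2) / cosh ((a - b) / 2) := by
  rw [← exp_zero, exp_add_exp_eq_two_mul_exp_mul_cosh, exp_add_exp_eq_two_mul_exp_mul_cosh,
    add_zero, sub_zero, mul_div_mul_left _ _ (by positivity)]

theorem sinh_le_mul_cosh {x : ℝ} (hx : 0 ≤ x) : sinh x ≤ x * cosh x := by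
  have hderiv (u : ℝ) : HasDerivAt (fun u ↦ u * cosh u - sinh u) (u * sinh u) u :=
    (((hasDerivAt_id' u).mul (hasDerivAt_cosh u)).sub (hasDerivAt_sinh u)).congr_deriv (by ring)
  have hmono : Monotone (fun u ↦ u * cosh u - sinh u) :=
    monotone_of_hasDerivAt_nonneg hderiv fun u ↦ by
      rcases le_total 0 u with hu | hu
      · exact mul_nonneg hu (sinh_nonneg_iff.mpr hu)
      · exact mul_nonneg_of_nonpos_of_nonpos hu (sinh_nonpos_iff.mpr hu)
  simpa using hmono hx

theorem monotoneOn_sq_div_two_sub_log_cosh :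
    MonotoneOn (fun u ↦ u ^ 2 / 2 - log (cosh u)) (Ici 0) := by
  have hderiv (u : ℝ) :
      HasDerivAt (fun u ↦ u ^ 2 / 2 - log (cosh u)) (u - sinh u / cosh u) u :=
    (((hasDerivAt_pow 2 u).div_const 2).sub
      ((hasDerivAt_cosh u).log (cosh_pos u).ne')).congr_deriv (by ring)
  refine monotoneOn_of_hasDerivWithinAt_nonneg (convex_Ici 0)
    (fun u _ ↦ (hderiv u).continuousAt.continuousWithinAt)
    (fun u _ ↦ (hderiv u).hasDerivWithinAt) fun u hu ↦ ?_
  rw [interior_Ici, mem_Ioi] at hu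
  rw [sub_nonneg, div_le_iff₀ (cosh_pos u)]
  exact sinh_le_mul_cosh hu.le

theorem log_cosh_sub_log_cosh_le {x y : ℝ} (h : |y| ≤ |x|) :
    log (cosh x) - log (cosh y) ≤ (x ^ 2 - y ^ 2) / 2 := by
  have := monotoneOn_sq_div_two_sub_log_cosh (abs_nonneg y) (abs_nonneg x) h
  simp only [sq_abs, cosh_abs] at this
  linarith

end Real

/-- Numeric part of composition of two LDP randomisers:
`log((e^{ε₁+ε₂}+1)/(e^{ε₁}+e^{ε₂})) ≤ ε₁ε₂/2`. -/
theorem ldp_composition_bound (ε₁ ε₂ : ℝ) (h₁ : 0 < ε₁) (h₂ : 0 < ε₂) :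
    Real.log ((Real.exp (ε₁ + ε₂) + 1) / (Real.exp ε₁ + Real.exp ε₂)) ≤ 1 / 2 * ε₁ * ε₂ := by
  have habs : |(ε₁ - ε₂) / 2| ≤ |(ε₁ + ε₂) / 2| := by
    rw [abs_of_pos (by positivity : 0 < (ε₁ + ε₂) / 2), abs_le]
    constructor <;> linarith
  rw [exp_add_add_one_div_exp_add_exp, log_div (cosh_pos _).ne' (cosh_pos _).ne']
  calc _ ≤ (((ε₁ + ε₂) / 2) ^ 2 - ((ε₁ - ε₂) / 2) ^ 2) / 2 := log_cosh_sub_log_cosh_le habs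
    _ = 1 / 2 * ε₁ * ε₂ := by ring
end
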